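/- Let d,k ≥ 1 be integers and c = (k−1)d+k²+2. Let (G,s_1,t_1,…,s_k,t_k) be a problem instance where G is a d-path-dominant digraph, let x be a key quality, and let L=(P_1,…,P_k) be an x-linkage for (G,s_1,t_1,…,s_k,t_k). Let B ⊆ V(L) be acceptable for L, let A = V(G)∖B, let 1 ≤ h,i ≤ k, let Q be a subpath of P_h|B with cd vertices and R a subpath of P_i|A with cd vertices, and let X be the set of all vertices of G that are both Q-outward and R-inward. Then |X∖V(L)| ≤ c−1, |X∩V(P_g|B)| ≤ c−1 and |X∩V(P_g|A)| ≤ c−1 for each g with 1 ≤ g ≤ k; consequently |X| ≤ (2k+1)(c−1). -/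

import Mathlib

open List

/-! Basic digraph/path definitions.  A digraph on `V` is a relation `G : V → V → Prop`
(looplessness is expressed by `Irreflexive G`).  A (directed) path is a nonempty list of
distinct vertices in which consecutive vertices are joined by edges of `G`. -/

/-- `uv` is an edge of the path `P`, i.e. `u,v` are consecutive on `P`. -/
def PEdge {V : Type} (P : List V) (u v : V) : Prop := [u, v] <:+: P

/-- `P` is a directed path of the digraph `G`. -/
def IsPath {V : Type} (G : V → V → Prop) (P : List V) : Prop :=
  P ≠ [] ∧ P.Nodup ∧ P.Chain' G

/-- `P` is a minimal path of `G`: for every edge `v_i v_j` of `G` between vertices of `P`,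
`j ≤ i + 1`. -/
def IsMinimal {V : Type} (G : V → V → Prop) (P : List V) : Prop :=
  ∀ i j : Fin P.length, G (P.get i) (P.get j) → (j : ℕ) ≤ (i : ℕ) + 1

/-- `G` is `d`-path-dominant. -/
def PathDominant {V : Type} (d : ℕ) (G : V → V → Prop) : Prop :=
  ∀ P : List V, IsPath G P → IsMinimal G P → P.length = d →
    ∀ v : V, v ∈ P ∨ (∃ w ∈ P, G v w) ∨ (∃ w ∈ P, G w v)

/-- A linkage: a tuple of pairwise vertex-disjoint paths. -/
def IsLinkage {V : Type} (G : V → V → Prop) {k : ℕ} (L : Fin k → List V) : Prop :=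
  (∀ i, IsPath G (L i)) ∧ ∀ i j : Fin k, i ≠ j → ∀ v, v ∈ L i → v ∉ L j

/-- `v` is `Q`-outward: `v ∉ Q` and no vertex of `Q` is adjacent from `v`. -/
def Outward {V : Type} (G : V → V → Prop) (Q : List V) (v : V) : Prop :=
  v ∉ Q ∧ ∀ w ∈ Q, ¬ G v w

/-- `v` is `Q`-inward: `v ∉ Q` and no vertex of `Q` is adjacent to `v`. -/
def Inward {V : Type} (G : V → V → Prop) (Q : List V) (v : V) : Prop :=
  v ∉ Q ∧ ∀ w ∈ Q, ¬ G w v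

section Inhab
variable {V : Type} [Inhabited V]

/-- A linkage for the problem instance `(G, s₁, t₁, …, s_k, t_k)`. -/
def IsLinkageFor (G : V → V → Prop) {k : ℕ} (s t : Fin k → V) (L : Fin k → List V) : Prop :=
  IsLinkage G L ∧ ∀ i, (L i).head! = s i ∧ (L i).getLast! = t i

/-- `x` is a quality: there is an `x`-linkage for the instance. -/
def IsQuality (G : V → V → Prop) {k : ℕ} (s t : Fin k → V) (x : Fin k → ℕ) : Prop :=
  ∃ L : Fin k → List V, IsLinkageFor G s t L ∧ ∀ i, (L i).length = x i

/-- `x` is a key quality: a quality not strictly dominating any other quality. -/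
def IsKeyQuality (G : V → V → Prop) {k : ℕ} (s t : Fin k → V) (x : Fin k → ℕ) : Prop :=
  IsQuality G s t x ∧ ¬ ∃ y : Fin k → ℕ, IsQuality G s t y ∧ y ≤ x ∧ y ≠ x

/-- `v` is an internal vertex of the linkage `M`. -/
def Internal {k : ℕ} (M : Fin k → List V) (v : V) : Prop :=
  (∃ i, v ∈ M i) ∧ ∀ i, v ≠ (M i).head! ∧ v ≠ (M i).getLast!

/-- The linkage `M` is internally disjoint from the linkage `L`. -/
def InternallyDisjointFrom {k l : ℕ} (M : Fin k → List V) (L : Fin l → List V) : Prop :=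
  ∀ v, Internal M v → ∀ i, v ∉ L i

/-- A planar `(Q,R)`-matching of cardinality `n`. -/
def IsPlanarMatching (G : V → V → Prop) (Q R : List V) {n : ℕ} (M : Fin n → List V) : Prop :=
  IsLinkage G M ∧ (∀ j, (M j).length = 2 ∨ (M j).length = 3) ∧
  (List.ofFn fun j => (M j).head!).Sublist Q ∧
  (List.ofFn fun j => (M j).getLast!).Sublist R

/-- A planar `(Q,R)`-matching is `s`-spaced. -/
def SSpaced (Q R : List V) {n : ℕ} (M : Fin n → List V) (s : ℕ) : Prop :=
  (∀ W : List V, W <:+: Q → W.length ≤ s →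
    ∀ j j' : Fin n, (∃ v ∈ W, v ∈ M j) → (∃ v ∈ W, v ∈ M j') → j = j') ∧
  (∀ W : List V, W <:+: R → W.length ≤ s →
    ∀ j j' : Fin n, (∃ v ∈ W, v ∈ M j) → (∃ v ∈ W, v ∈ M j') → j = j')

/-- `A(L)`: vertices outside `V(L)` that are `(M_j ∖ t(M_j))`-inward for some `j`
with `t(M_j) ≠ t_j`. -/
def RailA (G : V → V → Prop) {k : ℕ} (t : Fin k → V) (L : Fin k → List V) : Set V :=
  {v | (∀ i, v ∉ L i) ∧ ∃ j, (L j).getLast! ≠ t j ∧ ∀ w ∈ (L j).dropLast, ¬ G w v}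

/-- `B(L)`: vertices outside `V(L)` that are `(M_j ∖ s(M_j))`-outward for some `j`
with `s(M_j) ≠ s_j`. -/
def RailB (G : V → V → Prop) {k : ℕ} (s : Fin k → V) (L : Fin k → List V) : Set V :=
  {v | (∀ i, v ∉ L i) ∧ ∃ j, (L j).head! ≠ s j ∧ ∀ w ∈ (L j).tail, ¬ G v w}

/-- The confusion of the linkage `L`, namely `|A(L) ∩ B(L)|`. -/
noncomputable def Confusion (G : V → V → Prop) {k : ℕ} (s t : Fin k → V)
    (L : Fin k → List V) : ℕ :=
  (RailA G t L ∩ RailB G s L).ncard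

/-- `(L, X, Y)` is a `(k,m,c)`-rail in the problem instance. -/
def IsRail (G : V → V → Prop) {k : ℕ} (s t : Fin k → V) (m c : ℕ)
    (L : Fin k → List V) (X Y : Set V) : Prop :=
  IsLinkage G L ∧
  (∀ j, (L j).length ≤ 2*m ∧
    ((L j).length < 2*m → (L j).head! = s j ∨ (L j).getLast! = t j)) ∧
  Confusion G s t L ≤ c ∧
  Disjoint X Y ∧
  X ⊆ RailA G t L ∧ Y ⊆ RailB G s L ∧ X ∪ Y = RailA G t L ∪ RailB G s L

end Inhab

/-- The data of a potential rail: a `k`-tuple of paths together with two vertex sets. -/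
abbrev RailT (V : Type) (k : ℕ) := (Fin k → List V) × Set V × Set V

section Inhab2
variable {V : Type} [Inhabited V]

/-- The edge relation `(L,X,Y) → (L',X',Y')` between distinct rails. -/
def RailStep (G : V → V → Prop) {k : ℕ} (r r' : RailT V k) : Prop :=
  r ≠ r' ∧
  (∀ i, ∃ W : List V, IsPath G W ∧ W.head! = (r.1 i).head! ∧
    W.getLast! = (r'.1 i).getLast! ∧
    (∀ v, v ∈ W ↔ v ∈ r.1 i ∨ v ∈ r'.1 i) ∧
    (∀ u v, PEdge W u v ↔ PEdge (r.1 i) u v ∨ PEdge (r'.1 i) u v)) ∧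
  (∀ i, ∀ v ∈ r'.1 i, v ∈ r.1 i ∨ v ∈ r.2.1) ∧
  (∀ i, ∀ v ∈ r.1 i, v ∈ r'.1 i ∨ v ∈ r'.2.2) ∧
  r'.2.1 ⊆ r.2.1 ∧ r.2.2 ⊆ r'.2.2

/-- A path from `s₀` to `t₀` in the `(k,m,c)`-tracker, recorded by its list of
intermediate rail vertices. -/
def IsTrackerPath (G : V → V → Prop) {k : ℕ} (s t : Fin k → V) (m c : ℕ)
    (rs : List (RailT V k)) : Prop :=
  rs ≠ [] ∧ rs.Nodup ∧ rs.Chain' (RailStep G) ∧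
  (∀ r ∈ rs, IsRail G s t m c r.1 r.2.1 r.2.2) ∧
  (∀ r ∈ rs.head?, ∀ j, (r.1 j).head! = s j) ∧
  (∀ r ∈ rs.getLast?, ∀ j, (r.1 j).getLast! = t j)

end Inhab2

/-- A tracker path traces the linkage `P`: each `P j` is the union (as a digraph) of the
`j`-th members of the rails of the path. -/
def Traces {V : Type} {k : ℕ} (rs : List (RailT V k)) (P : Fin k → List V) : Prop :=
  ∀ j, (∀ v, v ∈ P j ↔ ∃ r ∈ rs, v ∈ r.1 j) ∧
       (∀ u v, PEdge (P j) u v ↔ ∃ r ∈ rs, PEdge (r.1 j) u v)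

section Dec
variable {V : Type} [DecidableEq V]

/-- `V(L)`, the set of vertices of the linkage `L`, as a finset. -/
def LV {k : ℕ} (L : Fin k → List V) : Finset V :=
  Finset.univ.biUnion fun i => (L i).toFinset

/-- `B` is acceptable for the linkage `L` (with parameters `d, k`). -/
def Acceptable [Inhabited V] (G : V → V → Prop) (d k : ℕ) (L : Fin k → List V)
    (B : Finset V) : Prop :=
  (∀ j : Fin k, ∀ u v : V, PEdge (L j) u v → v ∈ B → u ∈ B) ∧
  ∀ i j : Fin k, ¬ ∃ M : Fin ((k-1)*d + k^2 + 2) → List V,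
    IsPlanarMatching G ((L i).filter (· ∈ B)) ((L j).filter (· ∉ B)) M ∧
    InternallyDisjointFrom M L

/-- Labels along a tracker path, after the first rail: consecutive rails `r, r'`
contribute `|V(M'_j) ∖ V(M_j)|` in coordinate `j`. -/
def labelFrom {k : ℕ} : RailT V k → List (RailT V k) → (Fin k → ℕ)
  | _, [] => fun _ => 0
  | r, r' :: rest => (fun j => ((r'.1 j).toFinset \ (r.1 j).toFinset).card) + labelFrom r' rest

/-- The total label `l(P)` of a tracker path with rail list `rs`: the edge from `s₀`
contributes `|V(M_j)|`, each rail-to-rail edge contributes the difference counts, and the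
edge to `t₀` contributes `0`. -/
def pathLabel {k : ℕ} : List (RailT V k) → (Fin k → ℕ)
  | [] => fun _ => 0
  | r :: rest => (fun j => (r.1 j).toFinset.card) + labelFrom r rest

/-- `Q_{p,j}`: the maximal subpath of `P` with at most `m` vertices whose last vertex is
the last vertex of `P` among `v_1, …, v_p` (null if there is none). -/
def Qseg (m : ℕ) (e : List V) (p : ℕ) (P : List V) : List V :=
  (P.filter (· ∈ e.take p)).drop ((P.filter (· ∈ e.take p)).length - m)

/-- `R_{p,j}`: the maximal subpath of `P` with at most `m` vertices whose first vertex is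
the first vertex of `P` among `v_{p+1}, …, v_n` (null if there is none). -/
def Rseg (m : ℕ) (e : List V) (p : ℕ) (P : List V) : List V :=
  (P.filter (· ∈ e.drop p)).take m

/-- `M_{p,j} = Q_{p,j} ∪ R_{p,j}` (together with the connecting edge of `P` when both
are non-null). -/
def Mseg (m : ℕ) (e : List V) (p : ℕ) (P : List V) : List V :=
  Qseg m e p P ++ Rseg m e p P

end Dec

/-!
Every path of a linkage realising a key quality is minimal, since an edge skipping ahead along
it would shorten it. So `Q` and `R` split into `c` consecutive minimal paths on `d` vertices,
and `d`-path-dominance gives every `Q`-outward vertex an in-neighbour in each block of `Q`, and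
every `R`-inward vertex an out-neighbour in each block of `R`. Given `c` vertices `v_j` of `X`
off `V(L)`, neighbours `q_j, r_j` of `v_j` in the `j`-th blocks give a planar matching
`(q_j v_j r_j)` internally disjoint from `L`; given `c` vertices of `X` on `P_g|B` (or
`P_g|A`), listed along that path, the edges `v_j r_j` (or `q_j v_j`) give one too. Both
contradict acceptability.
-/

section Paths
variable {V : Type} {G : V → V → Prop}

theorem IsPath.infix {P W : List V} (hP : IsPath G P) (hW : W <:+: P) (hne : W ≠ []) :
    IsPath G W :=
  ⟨hne, hP.2.1.sublist hW.sublist, hP.2.2.infix hW⟩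

theorem IsMinimal.of_append_left {l₁ l₂ : List V} (h : IsMinimal G (l₁ ++ l₂)) :
    IsMinimal G l₁ := fun i j hij => by
  simpa using h ⟨i, by simp only [length_append]; omega⟩
    ⟨j, by simp only [length_append]; omega⟩
    (by simpa [getElem_append_left] using hij)

theorem IsMinimal.of_append_right {l₁ l₂ : List V} (h : IsMinimal G (l₁ ++ l₂)) :
    IsMinimal G l₂ := fun i j hij => by
  have := h ⟨l₁.length + i, by simp⟩ ⟨l₁.length + j, by simp⟩ (by simpa using hij)
  simp only at this
  omega

theorem IsMinimal.infix {P W : List V} (h : IsMinimal G P) (hW : W <:+: P) : IsMinimal G W := by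
  obtain ⟨s, t, rfl⟩ := hW
  exact h.of_append_left.of_append_right

theorem IsPath.exists_shorter_of_not_isMinimal {P : List V} (hP : IsPath G P)
    (h : ¬ IsMinimal G P) :
    ∃ W, IsPath G W ∧ W <+ P ∧ W.length < P.length ∧
      W.head? = P.head? ∧ W.getLast? = P.getLast? := by
  simp only [IsMinimal, not_forall, not_le] at h
  obtain ⟨⟨i, hi⟩, ⟨j, hj⟩, hG, hij⟩ := h
  simp only [get_eq_getElem] at hG hij
  have hne : P.take (i + 1) ≠ [] := by simp [hP.1]
  have hsub : P.take (i + 1) ++ P.drop j <+ P := by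
    conv_rhs => rw [← take_append_drop (i + 1) P]
    exact (Sublist.refl _).append (drop_sublist_drop_left _ (by omega))
  refine ⟨_, ⟨by simp [hne], hP.2.1.sublist hsub, ?_⟩, hsub,
    by simp only [length_append, length_take, length_drop]; omega, ?_, ?_⟩
  · have hlast : (P.take (i + 1)).getLast? = some P[i] := by simp [getLast?_take, hi]
    have hhead : (P.drop j).head? = some P[j] := by simp [hj]
    refine isChain_append.2 ⟨hP.2.2.infix (take_prefix _ _).isInfix,
      hP.2.2.infix (drop_suffix _ _).isInfix, fun x hx y hy => ?_⟩
    simp only [hlast, hhead, Option.mem_def, Option.some.injEq] at hx hy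
    exact hx ▸ hy ▸ hG
  · obtain ⟨a, l, rfl⟩ := exists_cons_of_ne_nil hP.1
    simp
  · rw [getLast?_append, getLast?_drop, if_neg (by omega)]
    obtain ⟨b, hb⟩ := Option.isSome_iff_exists.1 (getLast?_isSome.2 hP.1)
    simp [hb]

end Paths

section Linkages
variable {V : Type} [Inhabited V] {G : V → V → Prop} {k : ℕ} {s t : Fin k → V}

theorem IsLinkageFor.update {L : Fin k → List V} (hL : IsLinkageFor G s t L) {j : Fin k}
    {W : List V} (hW : IsPath G W) (hWL : W <+ L j) (hhead : W.head? = (L j).head?)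
    (hlast : W.getLast? = (L j).getLast?) : IsLinkageFor G s t (Function.update L j W) := by
  have hmem : ∀ g v, v ∈ Function.update L j W g → v ∈ L g := fun g v hv => by
    rcases eq_or_ne g j with rfl | hg
    · exact hWL.subset (by simpa using hv)
    · simpa [hg] using hv
  refine ⟨⟨fun g => ?_, fun g g' hgg' v hv hv' => hL.1.2 g g' hgg' v (hmem g v hv)
    (hmem g' v hv')⟩, fun g => ?_⟩
  all_goals rcases eq_or_ne g j with rfl | hg
  · simpa using hW
  · simpa [hg] using hL.1.1 g
  · simpa [head!_eq_head?_getD, hhead, hlast] using hL.2 g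
  · simpa [hg] using hL.2 g

theorem IsKeyQuality.isMinimal {x : Fin k → ℕ} (hx : IsKeyQuality G s t x)
    {L : Fin k → List V} (hL : IsLinkageFor G s t L) (hLx : ∀ i, (L i).length = x i)
    (j : Fin k) : IsMinimal G (L j) := by
  by_contra hmin
  obtain ⟨W, hW, hWL, hlt, hhead, hlast⟩ := (hL.1.1 j).exists_shorter_of_not_isMinimal hmin
  refine hx.2 ⟨fun g => (Function.update L j W g).length,
    ⟨_, hL.update hW hWL hhead hlast, fun _ => rfl⟩, fun g => ?_, fun heq => ?_⟩
  · rcases eq_or_ne g j with rfl | hg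
    · simpa [← hLx] using hlt.le
    · simp [hg, hLx]
  · have := congrFun heq j
    simp only [Function.update_self, ← hLx] at this
    omega

end Linkages

section Dominance
variable {V : Type} {G : V → V → Prop} {d : ℕ}

theorem PathDominant.exists_ofFn_sublist (hdom : PathDominant d G) (hd : 0 < d)
    {P : List V} (hP : IsPath G P) (hPm : IsMinimal G P) :
    ∀ {c : ℕ} {Q : List V}, Q <:+: P → Q.length = c * d → ∀ v : Fin c → V,
      ∃ a : Fin c → V, ofFn a <+ Q ∧ ∀ j, v j = a j ∨ G (v j) (a j) ∨ G (a j) (v j)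
  | 0, _, _, _, _ => ⟨Fin.elim0, by simp, fun j => j.elim0⟩
  | c + 1, Q, hQ, hlen, v => by
    have hW : Q.take d <:+: P := (take_prefix d Q).isInfix.trans hQ
    have hWlen : (Q.take d).length = d := by simp [hlen, Nat.succ_mul]
    obtain ⟨w, hw, hvw⟩ : ∃ w ∈ Q.take d, v 0 = w ∨ G (v 0) w ∨ G w (v 0) := by
      rcases hdom _ (hP.infix hW (ne_nil_of_length_pos (by omega))) (hPm.infix hW) hWlen (v 0)
        with h | ⟨w, hw, h⟩ | ⟨w, hw, h⟩
      exacts [⟨_, h, .inl rfl⟩, ⟨w, hw, .inr (.inl h)⟩, ⟨w, hw, .inr (.inr h)⟩]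
    obtain ⟨a, ha, hva⟩ := hdom.exists_ofFn_sublist hd hP hPm
      ((drop_suffix d Q).isInfix.trans hQ) (by simp [hlen, Nat.succ_mul]) fun j => v j.succ
    refine ⟨Fin.cons w a, ?_, Fin.cases hvw hva⟩
    rw [ofFn_succ]
    simpa using take_append_drop d Q ▸ (singleton_sublist.2 hw).append ha

theorem PathDominant.exists_ofFn_sublist_of_outward (hdom : PathDominant d G) (hd : 0 < d)
    {P Q : List V} (hP : IsPath G P) (hPm : IsMinimal G P) (hQ : Q <:+: P) {c : ℕ}
    (hlen : Q.length = c * d) {v : Fin c → V} (hv : ∀ j, Outward G Q (v j)) :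
    ∃ a : Fin c → V, ofFn a <+ Q ∧ ∀ j, G (a j) (v j) := by
  obtain ⟨a, ha, hva⟩ := hdom.exists_ofFn_sublist hd hP hPm hQ hlen v
  refine ⟨a, ha, fun j => ?_⟩
  have haQ : a j ∈ Q := ha.subset (mem_ofFn.2 ⟨j, rfl⟩)
  rcases hva j with h | h | h
  · exact absurd (h ▸ haQ) (hv j).1
  · exact absurd h ((hv j).2 _ haQ)
  · exact h

theorem PathDominant.exists_ofFn_sublist_of_inward (hdom : PathDominant d G) (hd : 0 < d)
    {P R : List V} (hP : IsPath G P) (hPm : IsMinimal G P) (hR : R <:+: P) {c : ℕ}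
    (hlen : R.length = c * d) {v : Fin c → V} (hv : ∀ j, Inward G R (v j)) :
    ∃ b : Fin c → V, ofFn b <+ R ∧ ∀ j, G (v j) (b j) := by
  obtain ⟨b, hb, hvb⟩ := hdom.exists_ofFn_sublist hd hP hPm hR hlen v
  refine ⟨b, hb, fun j => ?_⟩
  have hbR : b j ∈ R := hb.subset (mem_ofFn.2 ⟨j, rfl⟩)
  rcases hvb j with h | h | h
  · exact absurd (h ▸ hbR) (hv j).1
  · exact h
  · exact absurd h ((hv j).2 _ hbR)

end Dominance

theorem filter_isPrefix_and_filter_not_isSuffix {α : Type} {p : α → Prop} [DecidablePred p]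
    {l : List α} (h : ∀ u v, PEdge l u v → p v → p u) :
    l.filter (p ·) <+: l ∧ l.filter (¬ p ·) <:+ l := by
  have hchain : l.IsChain fun u v => ¬ p u → ¬ p v :=
    isChain_iff_forall_rel_of_append_cons_cons.2 fun a b l₁ l₂ hl hna hb =>
      hna (h a b ⟨l₁, l₂, by simp [hl]⟩ hb)
  have htake : ∀ v ∈ l.takeWhile (p ·), p v := fun v hv => by simpa using mem_takeWhile_imp hv
  have hdrop : ∀ v ∈ l.dropWhile (p ·), ¬ p v :=
    (hchain.infix (dropWhile_suffix _).isInfix).induction _ _ (fun _ _ hxy hx => hxy hx)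
      fun hne => by simpa using head_dropWhile_not (p ·) hne
  rw [← takeWhile_append_dropWhile (p := (p ·)) (l := l), filter_append, filter_append,
    filter_eq_self.2 (by simpa using htake), filter_eq_nil_iff.2 (by simpa using hdrop),
    filter_eq_nil_iff.2 (by simpa using htake), filter_eq_self.2 (by simpa using hdrop),
    append_nil, nil_append]
  exact ⟨prefix_append _ _, suffix_append _ _⟩

section Matchings
variable {V : Type} {c : ℕ}

theorem exists_ofFn_sublist_of_le_ncard {F : List V} {S : Set V} (hSF : ∀ v ∈ S, v ∈ F)
    (hc : c ≤ S.ncard) : ∃ a : Fin c → V, ofFn a <+ F ∧ ∀ j, a j ∈ S := by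
  classical
  set l := F.filter (· ∈ S)
  have hcl : c ≤ l.length := by
    have hsub : S ⊆ (l.toFinset : Set V) := fun v hv => by simpa [l] using ⟨hSF v hv, hv⟩
    calc c ≤ S.ncard := hc
      _ ≤ (l.toFinset : Set V).ncard := Set.ncard_le_ncard hsub (Finset.finite_toSet _)
      _ ≤ l.length := by rw [Set.ncard_coe_finset]; exact toFinset_card_le l
  have hmem : ∀ j : Fin c, l[j] ∈ S := fun j => by
    have hj : (j : ℕ) < l.length := by omega
    simpa using (mem_filter.1 (getElem_mem hj)).2
  have htake : ofFn (fun j : Fin c => l[j]) = l.take c :=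
    ext_getElem (by simp only [length_ofFn, length_take]; omega) fun n h₁ h₂ => by simp
  refine ⟨fun j => l[j], ?_, hmem⟩
  exact htake ▸ (take_sublist _ _).trans filter_sublist

variable [Inhabited V] {G : V → V → Prop} {FQ FR : List V}

theorem isPlanarMatching_pair (hQ : FQ.Nodup) (hR : FR.Nodup) (hQR : FQ.Disjoint FR)
    {a b : Fin c → V} (ha : ofFn a <+ FQ) (hb : ofFn b <+ FR) (hab : ∀ j, G (a j) (b j)) :
    IsPlanarMatching G FQ FR fun j => [a j, b j] := by
  have hai := nodup_ofFn.1 (hQ.sublist ha)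
  have hbi := nodup_ofFn.1 (hR.sublist hb)
  have haQ : ∀ j, a j ∈ FQ := fun j => ha.subset (mem_ofFn.2 ⟨j, rfl⟩)
  have hbR : ∀ j, b j ∈ FR := fun j => hb.subset (mem_ofFn.2 ⟨j, rfl⟩)
  refine ⟨⟨fun j => ⟨cons_ne_nil _ _, ?_, isChain_pair.2 (hab j)⟩,
    fun j j' hjj' v hv hv' => ?_⟩, fun j => .inl rfl, ha, hb⟩
  · simpa using fun h : a j = b j => hQR (haQ j) (h ▸ hbR j)
  · simp only [mem_cons, not_mem_nil, or_false] at hv hv'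
    rcases hv with rfl | rfl <;> rcases hv' with h | h
    exacts [hjj' (hai h), hQR (haQ j) (h ▸ hbR j'), hQR (haQ j') (h ▸ hbR j),
      hjj' (hbi h)]

theorem internallyDisjointFrom_pair {k : ℕ} (a b : Fin c → V) (L : Fin k → List V) :
    InternallyDisjointFrom (fun j => [a j, b j]) L := by
  rintro v ⟨⟨j, hv⟩, hends⟩
  simp only [mem_cons, not_mem_nil, or_false] at hv
  rcases hv with rfl | rfl
  exacts [absurd rfl (hends j).1, absurd rfl (hends j).2]

theorem isPlanarMatching_triple (hQ : FQ.Nodup) (hR : FR.Nodup) (hQR : FQ.Disjoint FR)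
    {a f b : Fin c → V} (ha : ofFn a <+ FQ) (hb : ofFn b <+ FR) (hf : Function.Injective f)
    (hfQ : ∀ j, f j ∉ FQ) (hfR : ∀ j, f j ∉ FR) (haf : ∀ j, G (a j) (f j))
    (hfb : ∀ j, G (f j) (b j)) :
    IsPlanarMatching G FQ FR fun j => [a j, f j, b j] := by
  have hai := nodup_ofFn.1 (hQ.sublist ha)
  have hbi := nodup_ofFn.1 (hR.sublist hb)
  have haQ : ∀ j, a j ∈ FQ := fun j => ha.subset (mem_ofFn.2 ⟨j, rfl⟩)
  have hbR : ∀ j, b j ∈ FR := fun j => hb.subset (mem_ofFn.2 ⟨j, rfl⟩)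
  refine ⟨⟨fun j => ⟨cons_ne_nil _ _, ?_,
    isChain_cons_cons.2 ⟨haf j, isChain_pair.2 (hfb j)⟩⟩, fun j j' hjj' v hv hv' => ?_⟩,
    fun j => .inr rfl, ha, hb⟩
  · simp only [nodup_cons, mem_cons, not_mem_nil, or_false, not_or, nodup_nil, and_true]
    exact ⟨⟨fun h => hfQ j (h ▸ haQ j), fun h => hQR (haQ j) (h ▸ hbR j)⟩,
      fun h => hfR j (h ▸ hbR j), not_false⟩
  · simp only [mem_cons, not_mem_nil, or_false] at hv hv'
    rcases hv with rfl | rfl | rfl <;> rcases hv' with h | h | h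
    exacts [hjj' (hai h), hfQ j' (h ▸ haQ j), hQR (haQ j) (h ▸ hbR j'),
      hfQ j (h ▸ haQ j'), hjj' (hf h), hfR j (h ▸ hbR j'),
      hQR (haQ j') (h ▸ hbR j), hfR j' (h ▸ hbR j), hjj' (hbi h)]

theorem internallyDisjointFrom_triple {k : ℕ} (a f b : Fin c → V) {L : Fin k → List V}
    (hf : ∀ j g, f j ∉ L g) : InternallyDisjointFrom (fun j => [a j, f j, b j]) L := by
  rintro v ⟨⟨j, hv⟩, hends⟩
  simp only [mem_cons, not_mem_nil, or_false] at hv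
  rcases hv with rfl | rfl | rfl
  exacts [absurd rfl (hends j).1, hf j, absurd rfl (hends j).2]

end Matchings

section Acceptable
variable {V : Type} [DecidableEq V]

theorem disjoint_filter_mem_filter_notMem (B : Finset V) (l₁ l₂ : List V) :
    (l₁.filter (· ∈ B)).Disjoint (l₂.filter (· ∉ B)) := fun v h₁ h₂ => by
  simp_all

variable [Inhabited V] {G : V → V → Prop} {d k c : ℕ} {L : Fin k → List V} {B : Finset V}

theorem Acceptable.infix_of_infix_filter_mem (hB : Acceptable G d k L B) {j : Fin k}
    {Q : List V} (hQ : Q <:+: (L j).filter (· ∈ B)) : Q <:+: L j :=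
  hQ.trans (filter_isPrefix_and_filter_not_isSuffix (hB.1 j)).1.isInfix

theorem Acceptable.infix_of_infix_filter_notMem (hB : Acceptable G d k L B) {j : Fin k}
    {R : List V} (hR : R <:+: (L j).filter (· ∉ B)) : R <:+: L j :=
  hR.trans (filter_isPrefix_and_filter_not_isSuffix (hB.1 j)).2.isInfix

theorem Acceptable.not_exists_isPlanarMatching (hB : Acceptable G d k L B)
    (hc : c = (k - 1) * d + k ^ 2 + 2) (i j : Fin k) :
    ¬ ∃ M : Fin c → List V, IsPlanarMatching G ((L i).filter (· ∈ B))
      ((L j).filter (· ∉ B)) M ∧ InternallyDisjointFrom M L := by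
  subst hc
  exact hB.2 i j

variable {X : Set V} {h i : Fin k}

theorem Acceptable.ncard_notMem_le (hB : Acceptable G d k L B)
    (hc : c = (k - 1) * d + k ^ 2 + 2) (hL : IsLinkage G L)
    (hout : ∀ v : Fin c → V, (∀ j, v j ∈ X) →
      ∃ a : Fin c → V, ofFn a <+ (L h).filter (· ∈ B) ∧ ∀ j, G (a j) (v j))
    (hin : ∀ v : Fin c → V, (∀ j, v j ∈ X) →
      ∃ b : Fin c → V, ofFn b <+ (L i).filter (· ∉ B) ∧ ∀ j, G (v j) (b j)) :
    {v | v ∈ X ∧ ∀ g, v ∉ L g}.ncard ≤ c - 1 := by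
  by_contra! hlt
  have hfin := Set.finite_of_ncard_pos (Nat.zero_lt_of_lt hlt)
  obtain ⟨f, hfF, hf⟩ := exists_ofFn_sublist_of_le_ncard (F := hfin.toFinset.toList)
    (S := {v | v ∈ X ∧ ∀ g, v ∉ L g}) (by simp) (c := c) (by omega)
  obtain ⟨a, ha, haf⟩ := hout f fun j => (hf j).1
  obtain ⟨b, hb, hfb⟩ := hin f fun j => (hf j).1
  refine hB.not_exists_isPlanarMatching hc h i
    ⟨_, ?_, internallyDisjointFrom_triple a f b fun j => (hf j).2⟩
  exact isPlanarMatching_triple ((hL.1 h).2.1.filter _) ((hL.1 i).2.1.filter _)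
    (disjoint_filter_mem_filter_notMem B _ _) ha hb
    (nodup_ofFn.1 ((Finset.nodup_toList _).sublist hfF))
    (fun j hm => (hf j).2 h (mem_filter.1 hm).1) (fun j hm => (hf j).2 i (mem_filter.1 hm).1)
    haf hfb

theorem Acceptable.ncard_mem_filter_mem_le (hB : Acceptable G d k L B)
    (hc : c = (k - 1) * d + k ^ 2 + 2) (hL : IsLinkage G L)
    (hin : ∀ v : Fin c → V, (∀ j, v j ∈ X) →
      ∃ b : Fin c → V, ofFn b <+ (L i).filter (· ∉ B) ∧ ∀ j, G (v j) (b j)) (g : Fin k) :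
    {v | v ∈ X ∧ v ∈ (L g).filter (· ∈ B)}.ncard ≤ c - 1 := by
  by_contra! hlt
  obtain ⟨a, ha, haX⟩ := exists_ofFn_sublist_of_le_ncard
    (S := {v | v ∈ X ∧ v ∈ (L g).filter (· ∈ B)}) (fun v hv => hv.2) (c := c) (by omega)
  obtain ⟨b, hb, hab⟩ := hin a fun j => (haX j).1
  exact hB.not_exists_isPlanarMatching hc g i ⟨_, isPlanarMatching_pair
    ((hL.1 g).2.1.filter _) ((hL.1 i).2.1.filter _) (disjoint_filter_mem_filter_notMem B _ _)
    ha hb hab, internallyDisjointFrom_pair a b L⟩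

theorem Acceptable.ncard_mem_filter_notMem_le (hB : Acceptable G d k L B)
    (hc : c = (k - 1) * d + k ^ 2 + 2) (hL : IsLinkage G L)
    (hout : ∀ v : Fin c → V, (∀ j, v j ∈ X) →
      ∃ a : Fin c → V, ofFn a <+ (L h).filter (· ∈ B) ∧ ∀ j, G (a j) (v j)) (g : Fin k) :
    {v | v ∈ X ∧ v ∈ (L g).filter (· ∉ B)}.ncard ≤ c - 1 := by
  by_contra! hlt
  obtain ⟨b, hb, hbX⟩ := exists_ofFn_sublist_of_le_ncard
    (S := {v | v ∈ X ∧ v ∈ (L g).filter (· ∉ B)}) (fun v hv => hv.2) (c := c) (by omega)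
  obtain ⟨a, ha, hab⟩ := hout b fun j => (hbX j).1
  exact hB.not_exists_isPlanarMatching hc h g ⟨_, isPlanarMatching_pair
    ((hL.1 h).2.1.filter _) ((hL.1 g).2.1.filter _) (disjoint_filter_mem_filter_notMem B _ _)
    ha hb hab, internallyDisjointFrom_pair a b L⟩

end Acceptable

theorem ncard_le_of_linkage_parts_le {V : Type} [DecidableEq V] {k n : ℕ} {X : Set V}
    (L : Fin k → List V) (B : Finset V) (h₀ : {v | v ∈ X ∧ ∀ g, v ∉ L g}.ncard ≤ n)
    (hB : ∀ g, {v | v ∈ X ∧ v ∈ (L g).filter (· ∈ B)}.ncard ≤ n)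
    (hA : ∀ g, {v | v ∈ X ∧ v ∈ (L g).filter (· ∉ B)}.ncard ≤ n) :
    X.ncard ≤ (2 * k + 1) * n := by
  have hX : X = {v | v ∈ X ∧ ∀ g, v ∉ L g} ∪ ⋃ g ∈ Finset.univ,
      ({v | v ∈ X ∧ v ∈ (L g).filter (· ∈ B)} ∪
        {v | v ∈ X ∧ v ∈ (L g).filter (· ∉ B)}) := by
    ext v
    simp only [Set.mem_union, Set.mem_ofPred_eq, Set.mem_iUnion, mem_filter, decide_eq_true_eq,
      Finset.mem_univ, exists_const]
    grind
  calc X.ncard ≤ n + ∑ _g : Fin k, (n + n) := by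
        rw [hX]
        refine (Set.ncard_union_le _ _).trans (add_le_add h₀ ?_)
        refine (Finset.set_ncard_biUnion_le _ _).trans (Finset.sum_le_sum fun g _ => ?_)
        exact (Set.ncard_union_le _ _).trans (add_le_add (hB g) (hA g))
    _ = (2 * k + 1) * n := by
      simp only [Finset.sum_const, Finset.card_univ, Fintype.card_fin, smul_eq_mul]; ring

theorem stmt10_general {V : Type} [DecidableEq V] [Inhabited V]
    (G : V → V → Prop)
    (d k : ℕ) (hd : 1 ≤ d) (hdom : PathDominant d G)
    (s t : Fin k → V) (x : Fin k → ℕ) (hx : IsKeyQuality G s t x)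
    (L : Fin k → List V) (hL : IsLinkageFor G s t L) (hLx : ∀ i, (L i).length = x i)
    (c : ℕ) (hc : c = (k-1)*d + k^2 + 2)
    (B : Finset V) (hB : Acceptable G d k L B)
    (h i : Fin k) (Q R : List V)
    (hQ : Q <:+: (L h).filter (· ∈ B)) (hQlen : Q.length = c * d)
    (hR : R <:+: (L i).filter (· ∉ B)) (hRlen : R.length = c * d) :
    {v : V | (Outward G Q v ∧ Inward G R v) ∧ ∀ g, v ∉ L g}.ncard ≤ c - 1 ∧
    (∀ g : Fin k,
      {v : V | (Outward G Q v ∧ Inward G R v) ∧ v ∈ (L g).filter (· ∈ B)}.ncard ≤ c - 1 ∧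
      {v : V | (Outward G Q v ∧ Inward G R v) ∧ v ∈ (L g).filter (· ∉ B)}.ncard ≤ c - 1) ∧
    {v : V | Outward G Q v ∧ Inward G R v}.ncard ≤ (2*k+1) * (c-1) := by
  have hmin := hx.isMinimal hL hLx
  have hout : ∀ v : Fin c → V, (∀ j, v j ∈ {v | Outward G Q v ∧ Inward G R v}) →
      ∃ a : Fin c → V, ofFn a <+ (L h).filter (· ∈ B) ∧ ∀ j, G (a j) (v j) := fun v hv =>
    (hdom.exists_ofFn_sublist_of_outward hd (hL.1.1 h) (hmin h)
      (hB.infix_of_infix_filter_mem hQ) hQlen fun j => (hv j).1).imp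
      fun _ ha => ⟨ha.1.trans hQ.sublist, ha.2⟩
  have hin : ∀ v : Fin c → V, (∀ j, v j ∈ {v | Outward G Q v ∧ Inward G R v}) →
      ∃ b : Fin c → V, ofFn b <+ (L i).filter (· ∉ B) ∧ ∀ j, G (v j) (b j) := fun v hv =>
    (hdom.exists_ofFn_sublist_of_inward hd (hL.1.1 i) (hmin i)
      (hB.infix_of_infix_filter_notMem hR) hRlen fun j => (hv j).2).imp
      fun _ hb => ⟨hb.1.trans hR.sublist, hb.2⟩
  have h₀ := hB.ncard_notMem_le hc hL.1 hout hin
  have hB' := hB.ncard_mem_filter_mem_le hc hL.1 hin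
  have hA' := hB.ncard_mem_filter_notMem_le hc hL.1 hout
  exact ⟨h₀, fun g => ⟨hB' g, hA' g⟩, ncard_le_of_linkage_parts_le L B h₀ hB' hA'⟩

theorem stmt10 {V : Type} [Fintype V] [DecidableEq V] [Inhabited V]
    (G : V → V → Prop) (hG : Irreflexive G)
    (d k : ℕ) (hd : 1 ≤ d) (hk : 1 ≤ k) (hdom : PathDominant d G)
    (s t : Fin k → V) (x : Fin k → ℕ) (hx : IsKeyQuality G s t x)
    (L : Fin k → List V) (hL : IsLinkageFor G s t L) (hLx : ∀ i, (L i).length = x i)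
    (c : ℕ) (hc : c = (k-1)*d + k^2 + 2)
    (B : Finset V) (hBsub : B ⊆ LV L) (hB : Acceptable G d k L B)
    (h i : Fin k) (Q R : List V)
    (hQ : Q <:+: (L h).filter (· ∈ B)) (hQlen : Q.length = c * d)
    (hR : R <:+: (L i).filter (· ∉ B)) (hRlen : R.length = c * d) :
    {v : V | (Outward G Q v ∧ Inward G R v) ∧ ∀ g, v ∉ L g}.ncard ≤ c - 1 ∧
    (∀ g : Fin k,
      {v : V | (Outward G Q v ∧ Inward G R v) ∧ v ∈ (L g).filter (· ∈ B)}.ncard ≤ c - 1 ∧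
      {v : V | (Outward G Q v ∧ Inward G R v) ∧ v ∈ (L g).filter (· ∉ B)}.ncard ≤ c - 1) ∧
    {v : V | Outward G Q v ∧ Inward G R v}.ncard ≤ (2*k+1) * (c-1) :=
  stmt10_general G d k hd hdom s t x hx L hL hLx c hc B hB h i Q R hQ hQlen hR hRlen
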